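/- Let S be a numerical semigroup with |Ap_2| = 3. If |C_3| ≥ 2, then every element x ∈ C_3 satisfies |Supp(x)| ≤ 2. -/

import Mathlib

open Set

/-- A numerical semigroup: a cofinite submonoid of ℕ. -/
def IsNumSgp (S : Set ℕ) : Prop :=
  0 ∈ S ∧ (∀ a ∈ S, ∀ b ∈ S, a + b ∈ S) ∧ Sᶜ.Finite

/-- The maximal ideal `M = S \ {0}`. -/
def MS (S : Set ℕ) : Set ℕ := S \ {0}

/-- The multiplicity `e` of `S`, the smallest nonzero element. -/
noncomputable def mult (S : Set ℕ) : ℕ := sInf (MS S)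

/-- `nM S h` is the set of sums of `h` elements of `M = S \ {0}` (with `nM S 0 = {0}`). -/
def nM (S : Set ℕ) : ℕ → Set ℕ
  | 0 => {0}
  | k + 1 => {x | ∃ a ∈ MS S, ∃ b ∈ nM S k, x = a + b}

/-- The order of `s`: the largest `h` with `s ∈ hM`. -/
noncomputable def ordS (S : Set ℕ) (s : ℕ) : ℕ := sSup {h | s ∈ nM S h}

/-- The Apéry set of `S` with respect to the multiplicity `e`:
elements `s ∈ S` with `s - e ∉ S`. -/
def Ap (S : Set ℕ) : Set ℕ := {s ∈ S | ∀ t ∈ S, t + mult S ≠ s}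

/-- Elements of the Apéry set of order `k`. -/
def ApK (S : Set ℕ) (k : ℕ) : Set ℕ := {s ∈ Ap S | ordS S s = k}

/-- `C_k = {s ∈ S : ord s = k and s - e ∉ (k-1)M}`. -/
def CK (S : Set ℕ) (k : ℕ) : Set ℕ :=
  {s ∈ S | ordS S s = k ∧ ∀ t ∈ nM S (k - 1), t + mult S ≠ s}

/-- `D_k = {s ∈ S : ord s = k-1 and ord (s+e) > k}`. -/
def DK (S : Set ℕ) (k : ℕ) : Set ℕ :=
  {s ∈ S | ordS S s = k - 1 ∧ k < ordS S (s + mult S)}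

/-- The Hilbert function of `R = k[[S]]`: `H(0) = 1`, `H(n) = |nM \ (n+1)M|`. -/
noncomputable def HF (S : Set ℕ) (n : ℕ) : ℕ := (nM S n \ nM S (n + 1)).ncard

/-- The set of minimal generators of `S`. -/
def MinGens (S : Set ℕ) : Set ℕ :=
  MS S \ {x | ∃ a ∈ MS S, ∃ b ∈ MS S, x = a + b}

/-- `a` is a maximal representation of `s`: a finitely supported coefficient
function on the minimal generators with `Σ aⱼ nⱼ = s` and `Σ aⱼ = ord s`. -/
def IsMaxRep (S : Set ℕ) (s : ℕ) (a : ℕ →₀ ℕ) : Prop :=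
  (↑a.support : Set ℕ) ⊆ MinGens S ∧
  (a.sum fun n c => c * n) = s ∧
  (a.sum fun _ c => c) = ordS S s

/-- `|Supp(s)|`: the maximal number of distinct minimal generators appearing
in a maximal representation of `s`. -/
noncomputable def SuppCard (S : Set ℕ) (s : ℕ) : ℕ :=
  sSup {q | ∃ a : ℕ →₀ ℕ, IsMaxRep S s a ∧ a.support.card = q}

/-- The Frobenius number of `S`. -/
noncomputable def Frob (S : Set ℕ) : ℕ := sSup Sᶜ

/-!
If `x = p + q + r` with distinct generators, the condition `x - e ∉ 2M` puts `p + q`, `p + r`,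
`q + r` into `Ap₂`, so these are all of `Ap₂`. Any other `y ∈ C₃` is a sum of three elements of
`M` all of whose pairwise sums then lie in `{p + q, p + r, q + r}`. Comparing the different
splittings of `y` forces the summands into `{p, q, r}` and then forces them to be distinct,
since `2u ∈ Ap₂` means `3u = p + q + r`, which holds for at most one `u`. Hence `y = x`.
-/

section NumericalSemigroup

variable {S : Set ℕ}

lemma pos_of_mem_MS {m : ℕ} (hm : m ∈ MS S) : 0 < m :=
  Nat.pos_of_ne_zero hm.2

lemma mem_nM_one {m : ℕ} (hm : m ∈ MS S) : m ∈ nM S 1 :=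
  ⟨m, hm, 0, rfl, rfl⟩

lemma nM_add_mem {x y : ℕ} : ∀ {h k : ℕ}, x ∈ nM S h → y ∈ nM S k → x + y ∈ nM S (h + k)
  | 0, k, hx, hy => by
    obtain rfl : x = 0 := hx
    simpa using hy
  | h + 1, k, ⟨a, ha, b, hb, hx⟩, hy => by
    rw [Nat.add_right_comm]
    exact ⟨a, ha, b + y, nM_add_mem hb hy, by omega⟩

lemma le_of_mem_nM : ∀ {h x : ℕ}, x ∈ nM S h → h ≤ x
  | 0, _, _ => Nat.zero_le _
  | _ + 1, _, ⟨a, ha, _, hb, hx⟩ => by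
    have := pos_of_mem_MS ha
    have := le_of_mem_nM hb
    omega

lemma bddAbove_setOf_mem_nM (s : ℕ) : BddAbove {h | s ∈ nM S h} :=
  ⟨s, fun _ => le_of_mem_nM⟩

lemma le_ordS_of_mem_nM {s h : ℕ} (hs : s ∈ nM S h) : h ≤ ordS S s :=
  le_csSup (bddAbove_setOf_mem_nM s) hs

lemma mem_nM_ordS {s : ℕ} (hs : ordS S s ≠ 0) : s ∈ nM S (ordS S s) := by
  refine Nat.sSup_mem ?_ (bddAbove_setOf_mem_nM s)
  by_contra hempty
  rw [Set.not_nonempty_iff_eq_empty] at hempty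
  exact hs (by rw [ordS, hempty, csSup_empty]; rfl)

lemma exists_add_add_eq_of_ordS_eq_three {s : ℕ} (hs : ordS S s = 3) :
    ∃ a ∈ MS S, ∃ b ∈ MS S, ∃ c ∈ MS S, a + b + c = s := by
  have h3 : s ∈ nM S 3 := hs ▸ mem_nM_ordS (by omega)
  obtain ⟨a, ha, _, ⟨b, hb, _, ⟨c, hc, _, rfl, h1⟩, h2⟩, h3⟩ := h3
  exact ⟨a, ha, b, hb, c, hc, by omega⟩

/-- `t + e = u + v` with `t ∈ M` would put `s - e = t + g` in `2M`. -/
lemma add_mem_ApK_two_of_mem_CK_three (hS : IsNumSgp S) {s g u v : ℕ} (hs : s ∈ CK S 3)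
    (hg : g ∈ MS S) (hu : u ∈ MS S) (hv : v ∈ MS S) (hsum : g + u + v = s) :
    u + v ∈ ApK S 2 := by
  obtain ⟨-, hord, hC⟩ := hs
  have huv : u + v ∈ nM S 2 := nM_add_mem (mem_nM_one hu) (mem_nM_one hv)
  have hv_pos := pos_of_mem_MS hv
  refine ⟨⟨hS.2.1 u hu.1 v hv.1, fun t ht hte => ?_⟩, ?_⟩
  · rcases Nat.eq_zero_or_pos t with rfl | ht0
    · have : mult S ≤ u := Nat.sInf_le hu
      omega
    · exact hC (t + g) (nM_add_mem (mem_nM_one ⟨ht, ht0.ne'⟩) (mem_nM_one hg)) (by omega)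
  · have hge : 2 ≤ ordS S (u + v) := le_ordS_of_mem_nM huv
    have hs : g + (u + v) ∈ nM S (1 + ordS S (u + v)) :=
      nM_add_mem (mem_nM_one hg) (mem_nM_ordS (by omega))
    have hle := le_ordS_of_mem_nM hs
    rw [← add_assoc, hsum, hord] at hle
    omega

lemma ApK_two_eq_of_add_add_mem_CK_three (hS : IsNumSgp S) (hAp : (ApK S 2).ncard = 3)
    {p q r : ℕ} (hp : p ∈ MS S) (hq : q ∈ MS S) (hr : r ∈ MS S)
    (hpq : p ≠ q) (hpr : p ≠ r) (hqr : q ≠ r) (hC : p + q + r ∈ CK S 3) :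
    ApK S 2 = {p + q, p + r, q + r} := by
  symm
  refine Set.eq_of_subset_of_ncard_le ?_ ?_ (Set.finite_of_ncard_ne_zero (by omega))
  · rintro _ (rfl | rfl | rfl)
    · exact add_mem_ApK_two_of_mem_CK_three hS hC hr hp hq (by ring)
    · exact add_mem_ApK_two_of_mem_CK_three hS hC hq hp hr (by ring)
    · exact add_mem_ApK_two_of_mem_CK_three hS hC hp hq hr rfl
  · rw [hAp, Set.ncard_eq_three.2 ⟨_, _, _, by omega, by omega, by omega, rfl⟩]

end NumericalSemigroup

lemma Finsupp.apply_eq_one_of_sum_le_card {α : Type*} (a : α →₀ ℕ)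
    (h : (a.sum fun _ c => c) ≤ a.support.card) {i : α} (hi : i ∈ a.support) : a i = 1 := by
  have hle : ∀ j ∈ a.support, 1 ≤ a j := fun j hj => Nat.one_le_iff_ne_zero.2 (mem_support_iff.1 hj)
  have hsum : ∑ j ∈ a.support, 1 = ∑ j ∈ a.support, a j :=
    le_antisymm (Finset.sum_le_sum hle) (by simpa [Finsupp.sum] using h)
  exact ((Finset.sum_eq_sum_iff_of_le hle).1 hsum i hi).symm

lemma exists_eq_add_add_of_isMaxRep {S : Set ℕ} {s : ℕ} {a : ℕ →₀ ℕ} (ha : IsMaxRep S s a)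
    (hs : ordS S s = 3) (hcard : 3 ≤ a.support.card) :
    ∃ p q r, p ∈ MinGens S ∧ q ∈ MinGens S ∧ r ∈ MinGens S ∧
      p ≠ q ∧ p ≠ r ∧ q ≠ r ∧ s = p + q + r := by
  obtain ⟨hsupp, hsum, hord⟩ := ha
  rw [hs] at hord
  have hone : ∀ {i}, i ∈ a.support → a i = 1 := a.apply_eq_one_of_sum_le_card (by omega)
  have hcard3 : a.support.card = 3 := by
    refine le_antisymm ?_ hcard
    rw [← hord, Finset.card_eq_sum_ones]
    exact Finset.sum_le_sum fun i hi => (hone hi).ge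
  obtain ⟨p, q, r, hpq, hpr, hqr, hpqr⟩ := Finset.card_eq_three.1 hcard3
  obtain ⟨hp, hq, hr⟩ : p ∈ a.support ∧ q ∈ a.support ∧ r ∈ a.support := by simp [hpqr]
  refine ⟨p, q, r, hsupp hp, hsupp hq, hsupp hr, hpq, hpr, hqr, ?_⟩
  rw [← hsum, Finsupp.sum, hpqr, Finset.sum_insert (by simp [hpq, hpr]),
    Finset.sum_insert (by simp [hqr]), Finset.sum_singleton, hone hp, hone hq, hone hr]
  ring

section PairSums

variable {G : Set ℕ} {p q r y : ℕ}

lemma three_mul_eq_of_add_self_mem (hpq : p ≠ q) (hpr : p ≠ r) (hqr : q ≠ r) {u : ℕ}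
    (hu : u ∈ ({p, q, r} : Set ℕ)) (h : u + u ∈ ({p + q, p + r, q + r} : Set ℕ)) :
    3 * u = p + q + r := by
  simp only [Set.mem_insert_iff, Set.mem_singleton_iff] at hu h
  omega

lemma mem_of_add_add_eq (hp : p ∈ G) (hq : q ∈ G) (hr : r ∈ G)
    (hT : ∀ u ∈ G, ∀ v ∈ G, ∀ w ∈ G, u + v + w = y → v + w ∈ ({p + q, p + r, q + r} : Set ℕ))
    {u v w : ℕ} (hu : u ∈ G) (hv : v ∈ G) (hw : w ∈ G) (hy : u + v + w = y) :
    u ∈ ({p, q, r} : Set ℕ) := by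
  have hvw := hT u hu v hv w hw hy
  simp only [Set.mem_insert_iff, Set.mem_singleton_iff] at hvw ⊢
  rcases hvw with h | h | h
  · have h1 := hT q hq u hu p hp (by omega)
    have h2 := hT p hp u hu q hq (by omega)
    simp only [Set.mem_insert_iff, Set.mem_singleton_iff] at h1 h2
    omega
  · have h1 := hT r hr u hu p hp (by omega)
    have h2 := hT p hp u hu r hr (by omega)
    simp only [Set.mem_insert_iff, Set.mem_singleton_iff] at h1 h2
    omega
  · have h1 := hT r hr u hu q hq (by omega)
    have h2 := hT q hq u hu r hr (by omega)
    simp only [Set.mem_insert_iff, Set.mem_singleton_iff] at h1 h2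
    omega

/-- If `y = 2u + v` with `v ≠ u`, then also `y = 2v + w` for the third element `w`, and
`2u, 2v ∈ {p + q, p + r, q + r}` would force `3u = p + q + r = 3v`. -/
lemma eq_of_add_self_add_eq (hp : p ∈ G) (hq : q ∈ G) (hr : r ∈ G)
    (hpq : p ≠ q) (hpr : p ≠ r) (hqr : q ≠ r)
    (hT : ∀ u ∈ G, ∀ v ∈ G, ∀ w ∈ G, u + v + w = y → v + w ∈ ({p + q, p + r, q + r} : Set ℕ))
    {u v : ℕ} (hu : u ∈ ({p, q, r} : Set ℕ)) (hv : v ∈ ({p, q, r} : Set ℕ))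
    (hy : u + u + v = y) : y = p + q + r := by
  have hsub : ({p, q, r} : Set ℕ) ⊆ G := by
    rintro _ (rfl | rfl | rfl) <;> assumption
  have hu3 := three_mul_eq_of_add_self_mem hpq hpr hqr hu
    (hT v (hsub hv) u (hsub hu) u (hsub hu) (by omega))
  by_contra hne
  obtain ⟨w, hw, huvw⟩ : ∃ w ∈ ({p, q, r} : Set ℕ), u + v + w = p + q + r := by
    simp only [Set.mem_insert_iff, Set.mem_singleton_iff] at hu hv ⊢
    refine ⟨p + q + r - u - v, ?_, ?_⟩ <;> omega
  have hv3 := three_mul_eq_of_add_self_mem hpq hpr hqr hv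
    (hT w (hsub hw) v (hsub hv) v (hsub hv) (by omega))
  omega

lemma eq_add_add_of_forall_add_mem (hp : p ∈ G) (hq : q ∈ G) (hr : r ∈ G)
    (hpq : p ≠ q) (hpr : p ≠ r) (hqr : q ≠ r)
    (hT : ∀ u ∈ G, ∀ v ∈ G, ∀ w ∈ G, u + v + w = y → v + w ∈ ({p + q, p + r, q + r} : Set ℕ))
    {a b c : ℕ} (ha : a ∈ G) (hb : b ∈ G) (hc : c ∈ G) (hy : a + b + c = y) :
    y = p + q + r := by
  have ha' := mem_of_add_add_eq hp hq hr hT ha hb hc hy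
  have hb' := mem_of_add_add_eq hp hq hr hT hb ha hc (by omega)
  have hc' := mem_of_add_add_eq hp hq hr hT hc ha hb (by omega)
  have hrep : ∀ {u v}, u ∈ ({p, q, r} : Set ℕ) → v ∈ ({p, q, r} : Set ℕ) → u + u + v = y →
      y = p + q + r :=
    eq_of_add_self_add_eq hp hq hr hpq hpr hqr hT
  by_cases hab : a = b
  · exact hrep ha' hc' (by omega)
  by_cases hac : a = c
  · exact hrep ha' hb' (by omega)
  by_cases hbc : b = c
  · exact hrep hb' ha' (by omega)
  simp only [Set.mem_insert_iff, Set.mem_singleton_iff] at ha' hb' hc'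
  omega

end PairSums

theorem stmt12 (S : Set ℕ) (hS : IsNumSgp S) (h2 : (ApK S 2).ncard = 3)
    (h3 : 2 ≤ (CK S 3).ncard) :
    ∀ x ∈ CK S 3, SuppCard S x ≤ 2 := by
  intro x hx
  refine csSup_le' ?_
  rintro _ ⟨a, ha, rfl⟩
  by_contra! hcard
  obtain ⟨p, q, r, hp, hq, hr, hpq, hpr, hqr, rfl⟩ :=
    exists_eq_add_add_of_isMaxRep ha hx.2.1 hcard
  have hAp := ApK_two_eq_of_add_add_mem_CK_three hS h2 hp.1 hq.1 hr.1 hpq hpr hqr hx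
  obtain ⟨y, hy, hyx⟩ := Set.exists_ne_of_one_lt_ncard h3 (p + q + r)
  obtain ⟨m₁, hm₁, m₂, hm₂, m₃, hm₃, hm⟩ := exists_add_add_eq_of_ordS_eq_three hy.2.1
  refine hyx (eq_add_add_of_forall_add_mem hp.1 hq.1 hr.1 hpq hpr hqr ?_ hm₁ hm₂ hm₃ hm)
  intro u hu v hv w hw huvw
  rw [← hAp]
  exact add_mem_ApK_two_of_mem_CK_three hS hy hu hv hw huvw
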